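/- For every legal plan P from the initial state I of an MA-STRIPS problem Π, there exists a legal plan P' from I that is a permutation of P (it consists of exactly the same actions, possibly in a different order), produces the same final state from I as P, has the same cost as P, and satisfies the Corollary-1 restrictions. -/

import Mathlib

/-- A STRIPS action over a set of propositions `P`. -/
structure StripsAction (P : Type*) where
  pre : Set P
  add : Set P
  del : Set P

namespace StripsAction

variable {P : Type*}

/-- The variable set of an action: all propositions it mentions. -/
def varset (a : StripsAction P) : Set P := a.pre ∪ a.add ∪ a.del

/-- An action is applicable in state `s` iff its preconditions hold in `s`. -/
def Applicable (a : StripsAction P) (s : Set P) : Prop := a.pre ⊆ s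

/-- Applying an action to a state: `a(s) = (s \ del(a)) ∪ add(a)`. -/
def apply (a : StripsAction P) (s : Set P) : Set P := (s \ a.del) ∪ a.add

end StripsAction

/-- The state obtained by applying a sequence of actions in order. -/
def applySeq {P : Type*} : List (StripsAction P) → Set P → Set P
  | [], s => s
  | a :: rest, s => applySeq rest (a.apply s)

/-- A sequence of actions is a legal plan from `s` iff each action is applicable in the
state obtained by applying the previous ones in order. -/
def LegalPlan {P : Type*} : List (StripsAction P) → Set P → Prop
  | [], _ => True
  | a :: rest, s => a.Applicable s ∧ LegalPlan rest (a.apply s)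

/-- An MA-STRIPS problem: pairwise-disjoint finite action sets `A i` (one per agent),
an initial state and a goal. -/
structure MAProblem (P Ag : Type*) where
  A : Ag → Set (StripsAction P)
  disjoint : ∀ i j : Ag, i ≠ j → Disjoint (A i) (A j)
  finite : ∀ i : Ag, (A i).Finite
  I : Set P
  G : Set P

namespace MAProblem

variable {P Ag : Type*}

/-- Proposition `p` is private to agent `i` iff every action mentioning `p` belongs to
`A i`. -/
def PrivateProp (pb : MAProblem P Ag) (p : P) (i : Ag) : Prop :=
  ∀ j : Ag, ∀ a ∈ pb.A j, p ∈ a.varset → j = i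

/-- An action `a ∈ A i` is private iff every proposition it mentions is private to `i`. -/
def PrivateAction (pb : MAProblem P Ag) (a : StripsAction P) (i : Ag) : Prop :=
  a ∈ pb.A i ∧ ∀ p ∈ a.varset, pb.PrivateProp p i

/-- An action of the problem is public iff it is not private. -/
def PublicAction (pb : MAProblem P Ag) (a : StripsAction P) : Prop :=
  (∃ i, a ∈ pb.A i) ∧ ∀ i : Ag, ¬ pb.PrivateAction a i

end MAProblem

/-- The cost of a plan is the sum of the costs of its actions. -/
def planCost {P : Type*} (cost : StripsAction P → ℝ) (L : List (StripsAction P)) : ℝ :=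
  (L.map cost).sum

/-- The Corollary-1 restrictions on a plan: (1) all actions up to and including the first
public action belong to one agent; (2) for every pair of consecutive public actions
`a_i, a_j` (no public action strictly in between), all actions `a_l` with `i < l ≤ j`
belong to one agent. -/
def Restrictions {P Ag : Type*} (pb : MAProblem P Ag) (L : List (StripsAction P)) : Prop :=
  (∀ i : Fin L.length, pb.PublicAction (L.get i) →
      (∀ l : Fin L.length, l < i → ¬ pb.PublicAction (L.get l)) →
      ∃ ag : Ag, ∀ l : Fin L.length, l ≤ i → L.get l ∈ pb.A ag) ∧
  (∀ i j : Fin L.length, i < j →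
      pb.PublicAction (L.get i) → pb.PublicAction (L.get j) →
      (∀ l : Fin L.length, i < l → l < j → ¬ pb.PublicAction (L.get l)) →
      ∃ ag : Ag, ∀ l : Fin L.length, i < l → l ≤ j → L.get l ∈ pb.A ag)

/-!
A private action of agent `i` mentions only propositions that no other agent's action mentions,
so it commutes with every action of another agent. Build the permuted plan from the back: the
reordered suffix is a sequence of blocks, each a run of non-public actions of one agent closed by
a public action of that agent, followed by non-public actions. A public action in front opens a
new block; a private action in front either joins the first block, if it belongs to that block's
agent, or commutes past the whole block and is inserted recursively into the rest.
-/

open List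

namespace StripsAction

variable {P : Type*} {a b : StripsAction P}

theorem mem_apply_of_notMem_varset {p : P} (h : p ∉ a.varset) (s : Set P) :
    p ∈ a.apply s ↔ p ∈ s := by
  simp only [varset, Set.mem_union, not_or] at h
  simp [apply, h.2, h.1.2]

theorem applicable_apply_iff (hd : Disjoint a.varset b.varset) (s : Set P) :
    b.Applicable (a.apply s) ↔ b.Applicable s := by
  have hpre : ∀ q ∈ b.pre, q ∉ a.varset := fun q hq hqa =>
    Set.disjoint_left.mp hd hqa (Or.inl (Or.inl hq))
  exact forall₂_congr fun q hq => mem_apply_of_notMem_varset (hpre q hq) s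

theorem mem_apply_congr {p : P} {s t : Set P} (h : p ∈ s ↔ p ∈ t) :
    p ∈ a.apply s ↔ p ∈ a.apply t := by
  simp only [apply, Set.mem_union, Set.mem_sdiff, h]

theorem apply_comm (hd : Disjoint a.varset b.varset) (s : Set P) :
    b.apply (a.apply s) = a.apply (b.apply s) := by
  ext p
  by_cases hpb : p ∈ b.varset
  · have hpa : p ∉ a.varset := Set.disjoint_right.mp hd hpb
    rw [mem_apply_of_notMem_varset hpa]
    exact mem_apply_congr (mem_apply_of_notMem_varset hpa s)
  · rw [mem_apply_of_notMem_varset hpb]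
    exact (mem_apply_congr (mem_apply_of_notMem_varset hpb s)).symm

end StripsAction

section Plans

variable {P : Type*}

theorem applySeq_append (X Y : List (StripsAction P)) (s : Set P) :
    applySeq (X ++ Y) s = applySeq Y (applySeq X s) := by
  induction X generalizing s with
  | nil => rfl
  | cons a X ih => exact ih _

theorem legalPlan_append (X Y : List (StripsAction P)) (s : Set P) :
    LegalPlan (X ++ Y) s ↔ LegalPlan X s ∧ LegalPlan Y (applySeq X s) := by
  induction X generalizing s with
  | nil => simp [LegalPlan, applySeq]
  | cons a X ih => simp [LegalPlan, applySeq, ih, and_assoc]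

def IsLegalReordering (s : Set P) (L' L : List (StripsAction P)) : Prop :=
  L'.Perm L ∧ LegalPlan L' s ∧ applySeq L' s = applySeq L s

namespace IsLegalReordering

variable {s : Set P} {L L₁ L₂ L₃ : List (StripsAction P)}

theorem refl (h : LegalPlan L s) : IsLegalReordering s L L :=
  ⟨.refl L, h, rfl⟩

theorem trans (h₁₂ : IsLegalReordering s L₁ L₂) (h₂₃ : IsLegalReordering s L₂ L₃) :
    IsLegalReordering s L₁ L₃ :=
  ⟨h₁₂.1.trans h₂₃.1, h₁₂.2.1, h₁₂.2.2.trans h₂₃.2.2⟩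

theorem append_left {X : List (StripsAction P)} (hX : LegalPlan X s)
    (h : IsLegalReordering (applySeq X s) L₁ L₂) :
    IsLegalReordering s (X ++ L₁) (X ++ L₂) := by
  refine ⟨h.1.append_left X, (legalPlan_append X L₁ s).mpr ⟨hX, h.2.1⟩, ?_⟩
  rw [applySeq_append, applySeq_append, h.2.2]

theorem append_right {Y : List (StripsAction P)} (h : IsLegalReordering s L₁ L₂)
    (hY : LegalPlan Y (applySeq L₂ s)) :
    IsLegalReordering s (L₁ ++ Y) (L₂ ++ Y) := by
  refine ⟨h.1.append_right Y, (legalPlan_append L₁ Y s).mpr ⟨h.2.1, h.2.2 ▸ hY⟩, ?_⟩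
  rw [applySeq_append, applySeq_append, h.2.2]

end IsLegalReordering

theorem isLegalReordering_concat_of_disjoint {a : StripsAction P} :
    ∀ {B : List (StripsAction P)} {s : Set P}, (∀ b ∈ B, Disjoint a.varset b.varset) →
      LegalPlan (a :: B) s → IsLegalReordering s (B ++ [a]) (a :: B)
  | [], _, _, h => .refl h
  | b :: B, s, hd, ⟨ha, hb, hB⟩ => by
    have hab : Disjoint a.varset b.varset := hd b mem_cons_self
    have hcomm := StripsAction.apply_comm hab s
    have hswap : IsLegalReordering s (b :: a :: B) (a :: b :: B) :=
      ⟨.swap a b B, ⟨(StripsAction.applicable_apply_iff hab s).mp hb,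
        (StripsAction.applicable_apply_iff hab.symm s).mpr ha, hcomm ▸ hB⟩,
        congrArg (applySeq B) hcomm.symm⟩
    have hrest := isLegalReordering_concat_of_disjoint (fun c hc => hd c (mem_cons_of_mem b hc))
      hswap.2.1.2
    exact (IsLegalReordering.append_left (X := [b]) ⟨hswap.2.1.1, trivial⟩ hrest).trans hswap

end Plans

namespace MAProblem

variable {P Ag : Type*} (pb : MAProblem P Ag)

inductive BlockForm : List (StripsAction P) → Prop
  | tail (T : List (StripsAction P)) (hT : ∀ a ∈ T, ¬ pb.PublicAction a) : BlockForm T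
  | block (ag : Ag) (ys : List (StripsAction P)) (p : StripsAction P) (M : List (StripsAction P))
      (hys : ∀ a ∈ ys, a ∈ pb.A ag ∧ ¬ pb.PublicAction a) (hp : p ∈ pb.A ag)
      (hpub : pb.PublicAction p) (hM : BlockForm M) : BlockForm (ys ++ [p] ++ M)

variable {pb}

theorem PrivateAction.not_publicAction {a : StripsAction P} {i : Ag}
    (h : pb.PrivateAction a i) : ¬ pb.PublicAction a :=
  fun hpub => hpub.2 i h

theorem exists_privateAction_of_not_publicAction {a : StripsAction P} {k : Ag}
    (hk : a ∈ pb.A k) (h : ¬ pb.PublicAction a) : ∃ i, pb.PrivateAction a i := by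
  by_contra hpriv
  exact h ⟨⟨k, hk⟩, not_exists.mp hpriv⟩

theorem PrivateAction.disjoint_varset {a b : StripsAction P} {i ag : Ag}
    (h : pb.PrivateAction a i) (ha : a ∉ pb.A ag) (hb : b ∈ pb.A ag) :
    Disjoint a.varset b.varset :=
  Set.disjoint_left.mpr fun p hpa hpb => ha (h.2 p hpa ag b hb hpb ▸ h.1)

theorem BlockForm.exists_cons_of_privateAction {a : StripsAction P} {i : Ag}
    (ha : pb.PrivateAction a i) {L : List (StripsAction P)} (hL : pb.BlockForm L) :
    ∀ {s : Set P}, LegalPlan (a :: L) s →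
      ∃ L', IsLegalReordering s L' (a :: L) ∧ pb.BlockForm L' := by
  induction hL with
  | tail T hT =>
    intro s h
    refine ⟨a :: T, .refl h, .tail _ ?_⟩
    simpa using ⟨ha.not_publicAction, hT⟩
  | block ag ys p M hys hp hpub hM ih =>
    intro s h
    by_cases hag : a ∈ pb.A ag
    · refine ⟨a :: (ys ++ [p] ++ M), .refl h, .block ag (a :: ys) p M ?_ hp hpub hM⟩
      simpa using ⟨⟨hag, ha.not_publicAction⟩, hys⟩
    have hdisj : ∀ b ∈ ys ++ [p], Disjoint a.varset b.varset :=
      forall_mem_append.mpr ⟨fun b hb => ha.disjoint_varset hag (hys b hb).1,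
        forall_mem_singleton.mpr (ha.disjoint_varset hag hp)⟩
    obtain ⟨hB, hM⟩ := (legalPlan_append (a :: (ys ++ [p])) M s).mp h
    have hcommute : IsLegalReordering s (ys ++ [p] ++ a :: M) (a :: (ys ++ [p] ++ M)) := by
      simpa using (isLegalReordering_concat_of_disjoint hdisj hB).append_right hM
    obtain ⟨hB', haM⟩ := (legalPlan_append _ (a :: M) s).mp hcommute.2.1
    obtain ⟨M', hM', hM'form⟩ := ih haM
    exact ⟨ys ++ [p] ++ M', (hM'.append_left hB').trans hcommute,
      .block ag ys p M' hys hp hpub hM'form⟩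

theorem exists_blockForm_reordering {L : List (StripsAction P)}
    (hmem : ∀ a ∈ L, ∃ k, a ∈ pb.A k) {s : Set P} (hL : LegalPlan L s) :
    ∃ L', IsLegalReordering s L' L ∧ pb.BlockForm L' := by
  induction L generalizing s with
  | nil => exact ⟨[], .refl trivial, .tail [] (by simp)⟩
  | cons a L ih =>
    obtain ⟨k, hk⟩ := hmem a mem_cons_self
    obtain ⟨L', hL', hL'form⟩ := ih (fun b hb => hmem b (mem_cons_of_mem a hb)) hL.2
    have hcons : IsLegalReordering s (a :: L') (a :: L) :=
      IsLegalReordering.append_left (X := [a]) ⟨hL.1, trivial⟩ hL'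
    by_cases hpub : pb.PublicAction a
    · exact ⟨a :: L', hcons, .block k [] a L' (by simp) hk hpub hL'form⟩
    · obtain ⟨i, hi⟩ := exists_privateAction_of_not_publicAction hk hpub
      obtain ⟨L'', hL'', hL''form⟩ := hL'form.exists_cons_of_privateAction hi hcons.2.1
      exact ⟨L'', hL''.trans hcons, hL''form⟩

theorem BlockForm.exists_agent_of_segment {L : List (StripsAction P)} (hL : pb.BlockForm L) :
    ∀ {l₀ j : ℕ} (hj : j < L.length), pb.PublicAction L[j] →
      (∀ m (hm : m < j), l₀ ≤ m → ¬ pb.PublicAction L[m]) →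
      ∃ ag, ∀ l (hl : l ≤ j), l₀ ≤ l → L[l] ∈ pb.A ag := by
  induction hL with
  | tail T hT => exact fun hj hpub _ => absurd hpub (hT _ (getElem_mem hj))
  | block ag ys p M hys hp hpub hM ih =>
    intro l₀ j hj hpubj hbetween
    have hlen : (ys ++ [p] ++ M).length = (ys ++ [p]).length + M.length := length_append
    have hBlen : (ys ++ [p]).length = ys.length + 1 := by simp
    rcases lt_or_ge j (ys ++ [p]).length with hjB | hjB
    · refine ⟨ag, fun l hl _ => ?_⟩
      rw [getElem_append_left (by omega)]
      rcases mem_append.mp (getElem_mem (l := ys ++ [p]) (n := l) (by omega)) with h | h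
      · exact (hys _ h).1
      · rw [mem_singleton.mp h]
        exact hp
    have hl₀ : (ys ++ [p]).length ≤ l₀ := by
      by_contra! h
      refine hbetween ys.length (by omega) (by omega) ?_
      simpa using hpub
    obtain ⟨k, rfl⟩ := Nat.exists_eq_add_of_le' hjB
    obtain ⟨k₀, rfl⟩ := Nat.exists_eq_add_of_le' hl₀
    have hk : k < M.length := by omega
    obtain ⟨ag', hag'⟩ := ih hk (by rwa [getElem_append_right' (ys ++ [p]) hk])
      fun m hm hkm => by
        rw [getElem_append_right' (ys ++ [p]) (hm.trans hk)]
        exact hbetween _ (Nat.add_lt_add_right hm _) (Nat.add_le_add_right hkm _)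
    refine ⟨ag', fun l hl hkl => ?_⟩
    obtain ⟨l', rfl⟩ := Nat.exists_eq_add_of_le' (le_trans (by omega) hkl)
    rw [← getElem_append_right' (ys ++ [p]) (by omega)]
    exact hag' l' (Nat.le_of_add_le_add_right hl) (Nat.le_of_add_le_add_right hkl)

theorem BlockForm.restrictions {L : List (StripsAction P)} (hL : pb.BlockForm L) :
    Restrictions pb L := by
  constructor
  · intro i hi hbefore
    obtain ⟨ag, hag⟩ := hL.exists_agent_of_segment (l₀ := 0) i.isLt hi
      fun m hm _ => hbefore ⟨m, by omega⟩ hm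
    exact ⟨ag, fun l hl => hag l hl (Nat.zero_le _)⟩
  · intro i j _ _ hj hbetween
    obtain ⟨ag, hag⟩ := hL.exists_agent_of_segment (l₀ := i + 1) j.isLt hj
      fun m hm him => hbetween ⟨m, by omega⟩ him hm
    exact ⟨ag, fun l hil hlj => hag l hlj hil⟩

end MAProblem

theorem exists_restricted_permutation_general {P Ag : Type*} (pb : MAProblem P Ag)
    (cost : StripsAction P → ℝ) (L : List (StripsAction P))
    (hmem : ∀ x ∈ L, ∃ k, x ∈ pb.A k)
    (hlegal : LegalPlan L pb.I) :
    ∃ L' : List (StripsAction P), L'.Perm L ∧ LegalPlan L' pb.I ∧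
      applySeq L' pb.I = applySeq L pb.I ∧
      planCost cost L' = planCost cost L ∧
      Restrictions pb L' := by
  obtain ⟨L', ⟨hperm, hlegal', hstate⟩, hL'⟩ := pb.exists_blockForm_reordering hmem hlegal
  exact ⟨L', hperm, hlegal', hstate, (hperm.map cost).sum_eq, hL'.restrictions⟩

/-- every legal plan from `I` (using actions of the problem) can be permuted
into a legal plan from `I` with the same final state and the same cost that satisfies
the Corollary-1 restrictions. -/
theorem exists_restricted_permutation {P Ag : Type*} [Finite P] (pb : MAProblem P Ag)
    (cost : StripsAction P → ℝ) (L : List (StripsAction P))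
    (hmem : ∀ x ∈ L, ∃ k, x ∈ pb.A k)
    (hlegal : LegalPlan L pb.I) :
    ∃ L' : List (StripsAction P), L'.Perm L ∧ LegalPlan L' pb.I ∧
      applySeq L' pb.I = applySeq L pb.I ∧
      planCost cost L' = planCost cost L ∧
      Restrictions pb L' :=
  exists_restricted_permutation_general pb cost L hmem hlegal
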